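/- arXiv:2604.24879 — 4 statements merged into one kernel-verified Lean document; each statement's English description precedes it below -/
import Mathlib

section
/- (Lemma: one step of the unrestriction algorithm, matrix form.) Let k be a field and let M be an m × n matrix with entries in the formal power series ring k[[t]] such that M has rank m over the field of Laurent series k((t)); equivalently, there is an injection c : {1,…,m} → {1,…,n} such that the determinant of the m × m submatrix of M on the columns c is a nonzero power series. Then there exist an m × m matrix X over k[[t]] and an m × n matrix N over k[[t]] such that M = X · N, det X ≠ 0, and the m × n matrix over k obtained by taking the constant coefficient of every entry of N has rank m. -/
/-!
If the constant-term rows of `M` are linearly dependent over `k`, say `∑ gⱼ M̄ⱼ = 0` with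
`gᵢ ≠ 0`, then the invertible row operation replacing row `i` by `∑ gⱼ Mⱼ` produces a row
divisible by `t`. Pulling that factor `t` out gives `M = E * N` with `ord (det E) = 1`, so the
order of the nonzero minor `det (M.submatrix id c)` drops by one. As this order is finite, the
process stops, and it can only stop once the constant-term rows are independent.
-/

namespace Stmt5

/-- The constant-term matrix of a matrix over `k[[t]]`. -/
noncomputable def constantTermMatrix {k : Type*} [Field k] {m n : ℕ}
    (N : Matrix (Fin m) (Fin n) (PowerSeries k)) : Matrix (Fin m) (Fin n) k :=
  N.map fun p => PowerSeries.constantCoeff p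

end Stmt5

namespace Matrix

theorem eq_diagonal_update_mul_updateRow {R ι κ : Type*} [CommSemiring R] [Fintype ι]
    [DecidableEq ι] (A : Matrix ι κ R) (i : ι) (x : R) (r : κ → R)
    (h : ∀ j, A i j = x * r j) :
    A = diagonal (Function.update 1 i x) * A.updateRow i r := by
  ext i' j
  rw [diagonal_mul]
  by_cases hi : i' = i
  · subst hi; simp [h]
  · simp [hi]

theorem det_diagonal_update_one {R ι : Type*} [CommRing R] [Fintype ι] [DecidableEq ι]
    (i : ι) (x : R) : (diagonal (Function.update 1 i x)).det = x := by
  simp [det_diagonal, Finset.prod_update_of_mem (Finset.mem_univ i)]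

theorem det_one_updateRow {R ι : Type*} [CommRing R] [Fintype ι] [DecidableEq ι]
    (i : ι) (g : ι → R) : ((1 : Matrix ι ι R).updateRow i g).det = g i := by
  have hg : ∑ j, g j • (1 : Matrix ι ι R) j = g := by
    ext q; simp [Finset.sum_apply, one_apply]
  simpa [hg] using det_updateRow_sum (1 : Matrix ι ι R) i g

end Matrix

namespace Stmt5

section

open PowerSeries Matrix

variable {k ι κ : Type*} [Field k] [Fintype ι] [DecidableEq ι]

theorem exists_eq_mul_det_order_eq_one (M : Matrix ι κ k⟦X⟧)
    (h : ¬ LinearIndependent k (M.map constantCoeff).row) :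
    ∃ (E : Matrix ι ι k⟦X⟧) (N : Matrix ι κ k⟦X⟧), M = E * N ∧ E.det.order = 1 := by
  obtain ⟨g, hg, i, hgi⟩ := Fintype.not_linearIndependent_iff.mp h
  set B : Matrix ι ι k⟦X⟧ := (1 : Matrix ι ι k⟦X⟧).updateRow i (fun j => C (g j))
  have hB : IsUnit B.det := by
    rw [det_one_updateRow]
    exact (isUnit_iff_ne_zero.mpr hgi).map C
  have hrow : ∀ q, X ∣ (B * M) i q := by
    intro q
    rw [X_dvd_iff, mul_apply]
    simpa [B, Finset.sum_apply] using congr_fun hg q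
  choose r hr using hrow
  refine ⟨B⁻¹ * diagonal (Function.update 1 i X), (B * M).updateRow i r, ?_, ?_⟩
  · rw [Matrix.mul_assoc, ← eq_diagonal_update_mul_updateRow _ i X r hr,
      nonsing_inv_mul_cancel_left _ _ hB]
  · rw [det_mul, det_diagonal_update_one, order_mul, order_X,
      order_zero_of_unit (isUnit_nonsing_inv_det B hB), zero_add]

theorem exists_eq_mul_rank_map_constantCoeff [Fintype κ] (M : Matrix ι κ k⟦X⟧) (c : ι → κ)
    (hdet : (M.submatrix id c).det ≠ 0) :
    ∃ (E : Matrix ι ι k⟦X⟧) (N : Matrix ι κ k⟦X⟧),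
      M = E * N ∧ E.det ≠ 0 ∧ (N.map constantCoeff).rank = Fintype.card ι := by
  induction hd : (M.submatrix id c).det.order using WellFoundedLT.induction generalizing M with
  | _ d ih =>
  by_cases hli : LinearIndependent k (M.map constantCoeff).row
  · exact ⟨1, M, (Matrix.one_mul M).symm, by simp, hli.rank_matrix⟩
  obtain ⟨E, N, rfl, hE⟩ := exists_eq_mul_det_order_eq_one M hli
  have hsub : ((E * N).submatrix id c).det = E.det * (N.submatrix id c).det := by
    rw [← det_mul]; rfl
  have hEdet : E.det ≠ 0 := by
    rintro h0; simp [h0] at hE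
  have hN : (N.submatrix id c).det ≠ 0 := right_ne_zero_of_mul (hsub ▸ hdet)
  have hlt : (N.submatrix id c).det.order < d := by
    rw [← hd, hsub, order_mul, hE, add_comm,
      ENat.lt_add_one_iff (order_finite_iff_ne_zero.mpr hN).ne]
  obtain ⟨E', N', rfl, hE', hrank⟩ := ih _ hlt N hN rfl
  exact ⟨E * E', N', (Matrix.mul_assoc _ _ _).symm, det_mul E E' ▸ mul_ne_zero hEdet hE', hrank⟩

end

theorem one_step_unrestriction_general
    (k : Type*) [Field k] (m n : ℕ)
    (M : Matrix (Fin m) (Fin n) (PowerSeries k))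
    (c : Fin m → Fin n)
    (hdet : (M.submatrix id c).det ≠ 0) :
    ∃ (X : Matrix (Fin m) (Fin m) (PowerSeries k))
      (N : Matrix (Fin m) (Fin n) (PowerSeries k)),
      M = X * N ∧ X.det ≠ 0 ∧ (constantTermMatrix N).rank = m := by
  simpa [constantTermMatrix] using exists_eq_mul_rank_map_constantCoeff M c hdet

/-- **One step of the unrestriction algorithm.** If an `m × n` matrix `M` over `k[[t]]`
has an injective choice of `m` columns whose determinant is a nonzero power series (i.e.
`M` has rank `m` over `k((t))`), then `M = X · N` with `X` an `m × m` matrix with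
`det X ≠ 0` and `N` an `m × n` matrix whose constant-term matrix has rank `m`. -/
theorem one_step_unrestriction
    (k : Type*) [Field k] (m n : ℕ)
    (M : Matrix (Fin m) (Fin n) (PowerSeries k))
    (c : Fin m → Fin n) (hc : Function.Injective c)
    (hdet : (M.submatrix id c).det ≠ 0) :
    ∃ (X : Matrix (Fin m) (Fin m) (PowerSeries k))
      (N : Matrix (Fin m) (Fin n) (PowerSeries k)),
      M = X * N ∧ X.det ≠ 0 ∧ (constantTermMatrix N).rank = m :=
  one_step_unrestriction_general k m n M c hdet

end Stmt5
end

section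
/- (Uniqueness of one-step unrestrictions up to GL, matrix form.) Let k be a field and m ≤ n. Suppose X and X' are m × m matrices over k[[t]] with det X ≠ 0 and det X' ≠ 0, and N and N' are m × n matrices over k[[t]] whose constant-term matrices over k both have rank m, and suppose X · N = X' · N'. Then there exists an m × m matrix G over k[[t]] whose determinant is a unit of k[[t]] (i.e. has nonzero constant coefficient) such that X' = X · G and N = G · N'. -/
/-!
Since the constant-term matrix of `N'` has rank `m`, some `m × m` column submatrix `M'` of `N'`
has a determinant with nonzero constant term, so `M'` is invertible over `k[[t]]`. Restricting
`X N = X' N'` to those columns gives `X' = X G` with `G = N_φ M'⁻¹`, and cancelling `X` (whose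
determinant is a nonzerodivisor) gives `N = G N'`. Finally an invertible column submatrix of `N`
factors as `G` times a square matrix, so `det G` is a unit.
-/

namespace Stmt6

/-- The constant-term matrix of a matrix over `k[[t]]`. -/
noncomputable def constantTermMatrix {k : Type*} [Field k] {m n : ℕ}
    (N : Matrix (Fin m) (Fin n) (PowerSeries k)) : Matrix (Fin m) (Fin n) k :=
  N.map fun p => PowerSeries.constantCoeff p

end Stmt6

namespace Matrix

theorem exists_det_submatrix_ne_zero_of_rank_eq_card {K m n : Type*} [Field K]
    [Fintype m] [DecidableEq m] [Fintype n] (A : Matrix m n K) (hA : A.rank = Fintype.card m) :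
    ∃ φ : m → n, (A.submatrix id φ).det ≠ 0 := by
  obtain ⟨κ, a, -, hspan, hli⟩ := exists_linearIndependent' K A.col
  have hspan_top : Submodule.span K (Set.range (A.col ∘ a)) = ⊤ := by
    rw [hspan]
    apply Submodule.eq_top_of_finrank_eq
    rw [← rank_eq_finrank_span_cols, hA, Module.finrank_fintype_fun_eq_card]
  let e : m ≃ κ := ((Module.Basis.mk hli hspan_top.ge).indexEquiv (Pi.basisFun K m)).symm
  refine ⟨a ∘ e, ?_⟩
  rw [← isUnit_iff_ne_zero, ← isUnit_iff_isUnit_det, ← linearIndependent_cols_iff_isUnit]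
  exact hli.comp e e.injective

variable {R m n : Type*} [CommRing R] [Fintype m]

theorem submatrix_cols_mul (X : Matrix m m R) (N : Matrix m n R) {p : Type*} (φ : p → n) :
    (X * N).submatrix id φ = X * N.submatrix id φ := by
  simpa using submatrix_mul X N id id φ Function.bijective_id

variable [DecidableEq m]

theorem mul_left_cancel_of_isLeftRegular_det {X : Matrix m m R} (hX : IsLeftRegular X.det)
    {A B : Matrix m n R} (h : X * A = X * B) : A = B := by
  refine hX.matrix ?_
  simpa only [← Matrix.mul_assoc, adjugate_mul, smul_mul, Matrix.one_mul]
    using congrArg (X.adjugate * ·) h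

theorem exists_eq_mul_and_eq_mul_of_mul_eq_mul {X X' : Matrix m m R} {N N' : Matrix m n R}
    (hX : IsLeftRegular X.det) (φ : m → n) (hφ : IsUnit (N'.submatrix id φ).det)
    (h : X * N = X' * N') : ∃ G : Matrix m m R, X' = X * G ∧ N = G * N' := by
  set G := N.submatrix id φ * (N'.submatrix id φ)⁻¹
  have hXG : X' = X * G := by
    have hsub : X * N.submatrix id φ = X' * N'.submatrix id φ := by
      rw [← submatrix_cols_mul, h, submatrix_cols_mul]
    rw [← Matrix.mul_assoc, hsub, mul_nonsing_inv_cancel_right _ _ hφ]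
  refine ⟨G, hXG, mul_left_cancel_of_isLeftRegular_det hX ?_⟩
  rw [h, hXG, Matrix.mul_assoc]

theorem isUnit_det_of_eq_mul {G : Matrix m m R} {N N' : Matrix m n R} (h : N = G * N')
    (φ : m → n) (hφ : IsUnit (N.submatrix id φ).det) : IsUnit G.det := by
  rw [h, submatrix_cols_mul, det_mul] at hφ
  exact isUnit_of_mul_isUnit_left hφ

end Matrix

namespace Stmt6

open Matrix

theorem exists_isUnit_det_submatrix_of_rank_constantTermMatrix {k : Type*} [Field k] {m n : ℕ}
    {N : Matrix (Fin m) (Fin n) (PowerSeries k)} (hN : (constantTermMatrix N).rank = m) :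
    ∃ φ : Fin m → Fin n, IsUnit (N.submatrix id φ).det := by
  obtain ⟨φ, hφ⟩ := exists_det_submatrix_ne_zero_of_rank_eq_card (constantTermMatrix N)
    (by rw [hN, Fintype.card_fin])
  refine ⟨φ, PowerSeries.isUnit_iff_constantCoeff.mpr ?_⟩
  rw [RingHom.map_det]
  exact hφ.isUnit

theorem one_step_unrestriction_unique_general
    (k : Type*) [Field k] (m n : ℕ)
    (X X' : Matrix (Fin m) (Fin m) (PowerSeries k))
    (N N' : Matrix (Fin m) (Fin n) (PowerSeries k))
    (hX : X.det ≠ 0)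
    (hN : (constantTermMatrix N).rank = m)
    (hN' : (constantTermMatrix N').rank = m)
    (h : X * N = X' * N') :
    ∃ G : Matrix (Fin m) (Fin m) (PowerSeries k),
      PowerSeries.constantCoeff G.det ≠ 0 ∧ X' = X * G ∧ N = G * N' := by
  obtain ⟨φ', hφ'⟩ := exists_isUnit_det_submatrix_of_rank_constantTermMatrix hN'
  obtain ⟨G, hXG, hNG⟩ :=
    exists_eq_mul_and_eq_mul_of_mul_eq_mul (IsRegular.of_ne_zero hX).left φ' hφ' h
  obtain ⟨φ, hφ⟩ := exists_isUnit_det_submatrix_of_rank_constantTermMatrix hN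
  have hG : IsUnit G.det := isUnit_det_of_eq_mul hNG φ hφ
  exact ⟨G, (PowerSeries.isUnit_iff_constantCoeff.mp hG).ne_zero, hXG, hNG⟩

/-- **Uniqueness of one-step unrestrictions up to `GL`.** If `X · N = X' · N'` with
`det X, det X' ≠ 0` and the constant-term matrices of `N` and `N'` of rank `m`, then
`X' = X · G` and `N = G · N'` for some matrix `G` over `k[[t]]` whose determinant is a
unit of `k[[t]]`, i.e. has nonzero constant coefficient. -/
theorem one_step_unrestriction_unique
    (k : Type*) [Field k] (m n : ℕ) (hmn : m ≤ n)
    (X X' : Matrix (Fin m) (Fin m) (PowerSeries k))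
    (N N' : Matrix (Fin m) (Fin n) (PowerSeries k))
    (hX : X.det ≠ 0) (hX' : X'.det ≠ 0)
    (hN : (constantTermMatrix N).rank = m)
    (hN' : (constantTermMatrix N').rank = m)
    (h : X * N = X' * N') :
    ∃ G : Matrix (Fin m) (Fin m) (PowerSeries k),
      PowerSeries.constantCoeff G.det ≠ 0 ∧ X' = X * G ∧ N = G * N' :=
  one_step_unrestriction_unique_general k m n X X' N N' hX hN hN' h

end Stmt6
end

section
/- (Proposition: genericity conditions via the centroid.) Let k be a field, d ≥ 3, and W_1,…,W_d k-vector spaces each of dimension m ≥ 1. Let T : W_1^∨ × ⋯ × W_d^∨ → k be a concise multilinear map with dim_k Cen(T) ≥ m. Fix an index i ∈ {1,…,d} and a functional α ∈ W_i^∨. Then the following are equivalent: (1) for some index j ≠ i, the contraction at α is injective in slot j, i.e. the only β ∈ W_j^∨ such that T(γ) = 0 for every tuple γ with γ_i = α and γ_j = β is β = 0; (2) the same holds for every index j ≠ i; (3) the k-linear map Cen(T) → W_i^∨ sending a tuple (X_1,…,X_d) to α ∘ X_i is surjective. Moreover, if these conditions hold, then dim_k Cen(T) = m and the map in (3) is bijective.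 -/
/-!
For `X` in the centroid, the centroid identity moves `X` from one slot of `T` to any other.
If `α ∘ X_i = 0`, moving `X_j` into slot `i` shows that every `β ∘ X_j` lies in the kernel of
the contraction at `α` in slot `j`; injectivity of that contraction gives `X_j = 0`, and moving
`X_j` into each other slot, conciseness gives `X = 0`. So `X ↦ α ∘ X_i` is injective, hence
bijective because `dim Cen(T) ≥ m = dim W_i^∨`. Conversely, if it is surjective and `β` is in
the kernel of the contraction at `α` in slot `j`, then for any `γ` with `γ_j = β` pick `X` with
`α ∘ X_i = γ_i`: moving `X_i` to a third slot `l ∉ {i, j}` shows `T γ = 0`, so `β = 0` by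
conciseness.
-/

open scoped BigOperators

namespace Stmt12

variable {k : Type*} [Field k] {d : ℕ} {W : Fin d → Type*}
  [∀ i, AddCommGroup (W i)] [∀ i, Module k (W i)]

/-- The centroid of a multilinear map `T : W₁^∨ × ⋯ × W_d^∨ → k`: the subspace of tuples
`X = (X₁,…,X_d)` of endomorphisms with `X_i ∘_i T = X_j ∘_j T` for all `i, j`, where
`X_i ∘_i T` is `T` with the `i`-th argument `α_i` replaced by `α_i ∘ X_i`. -/
def centroid (T : MultilinearMap k (fun i : Fin d => Module.Dual k (W i)) k) :
    Submodule k (∀ i, W i →ₗ[k] W i) where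
  carrier := {X | ∀ (i j : Fin d) (α : ∀ l : Fin d, Module.Dual k (W l)),
    T (Function.update α i ((X i).dualMap (α i))) =
      T (Function.update α j ((X j).dualMap (α j)))}
  add_mem' := by
    intro X Y hX hY i j α
    have h : ∀ l : Fin d, ((X + Y) l).dualMap (α l)
        = (X l).dualMap (α l) + (Y l).dualMap (α l) := by
      intro l; ext w; simp [LinearMap.dualMap_apply]
    rw [h i, h j, T.map_update_add, T.map_update_add, hX i j α, hY i j α]
  zero_mem' := by
    intro i j α
    have h : ∀ l : Fin d, ((0 : ∀ i, W i →ₗ[k] W i) l).dualMap (α l) = 0 := by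
      intro l; ext w; simp [LinearMap.dualMap_apply]
    rw [h i, h j,
      T.map_coord_zero (m := Function.update α i 0) i (Function.update_self i 0 α),
      T.map_coord_zero (m := Function.update α j 0) j (Function.update_self j 0 α)]
  smul_mem' := by
    intro c X hX i j α
    have h : ∀ l : Fin d, ((c • X) l).dualMap (α l) = c • (X l).dualMap (α l) := by
      intro l; ext w; simp [LinearMap.dualMap_apply]
    rw [h i, h j, T.map_update_smul, T.map_update_smul, hX i j α]

/-- Conciseness in slot `i`. -/
def ConciseIn (T : MultilinearMap k (fun i : Fin d => Module.Dual k (W i)) k)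
    (i : Fin d) : Prop :=
  ∀ α : Module.Dual k (W i),
    (∀ γ : ∀ l : Fin d, Module.Dual k (W l), γ i = α → T γ = 0) → α = 0

/-- Conciseness in every slot. -/
def Concise (T : MultilinearMap k (fun i : Fin d => Module.Dual k (W i)) k) : Prop :=
  ∀ i : Fin d, ConciseIn T i

/-- Injectivity of the contraction of `T` at `α ∈ W_i^∨` in slot `j`: the only
`β ∈ W_j^∨` such that `T γ = 0` for every tuple `γ` with `γ i = α` and `γ j = β` is
`β = 0`. -/
def ContractionInjAt (T : MultilinearMap k (fun i : Fin d => Module.Dual k (W i)) k)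
    (i : Fin d) (α : Module.Dual k (W i)) (j : Fin d) : Prop :=
  ∀ β : Module.Dual k (W j),
    (∀ γ : ∀ l : Fin d, Module.Dual k (W l), γ i = α → γ j = β → T γ = 0) → β = 0

theorem _root_.LinearMap.eq_zero_of_dualMap_eq_zero {R M : Type*} [CommRing R] [AddCommGroup M]
    [Module R M] [Module.Projective R M] {f : M →ₗ[R] M} (h : f.dualMap = 0) : f = 0 := by
  ext v
  refine (Module.forall_dual_apply_eq_zero_iff R (f v)).mp fun φ => ?_
  simpa using LinearMap.congr_fun (LinearMap.congr_fun h φ) v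

theorem _root_.LinearMap.bijective_of_injective_of_finrank_le {K V V' : Type*} [Field K]
    [AddCommGroup V] [Module K V] [AddCommGroup V'] [Module K V'] [FiniteDimensional K V']
    {f : V →ₗ[K] V'} (hf : Function.Injective f)
    (h : Module.finrank K V' ≤ Module.finrank K V) :
    Function.Bijective f :=
  have := Module.Finite.of_injective f hf
  ⟨hf, (LinearMap.injective_iff_surjective_of_finrank_eq_finrank
    ((LinearMap.finrank_le_finrank_of_injective hf).antisymm h)).mp hf⟩

variable {T : MultilinearMap k (fun i : Fin d => Module.Dual k (W i)) k}

open Function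

theorem apply_update_dualMap_eq_of_mem_centroid {X : ∀ l, W l →ₗ[k] W l}
    (hX : X ∈ centroid T) {i j : Fin d} (hij : i ≠ j) (γ : ∀ l, Module.Dual k (W l))
    (a : Module.Dual k (W i)) :
    T (update γ i ((X i).dualMap a)) = T (update (update γ i a) j ((X j).dualMap (γ j))) := by
  simpa [update_of_ne hij.symm] using hX i j (update γ i a)

theorem apply_update_dualMap_eq_zero_of_mem_centroid {X : ∀ l, W l →ₗ[k] W l}
    (hX : X ∈ centroid T) {i j : Fin d} (hij : i ≠ j) {γ : ∀ l, Module.Dual k (W l)}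
    (hj : (X j).dualMap (γ j) = 0) (a : Module.Dual k (W i)) :
    T (update γ i ((X i).dualMap a)) = 0 := by
  rw [apply_update_dualMap_eq_of_mem_centroid hX hij, hj,
    T.map_coord_zero j (update_self j 0 _)]

theorem eq_zero_of_mem_centroid (hconc : Concise T) {X : ∀ l, W l →ₗ[k] W l}
    (hX : X ∈ centroid T) {j : Fin d} (hj : X j = 0) : X = 0 := by
  funext l
  obtain rfl | hlj := eq_or_ne l j
  · exact hj
  refine LinearMap.eq_zero_of_dualMap_eq_zero (LinearMap.ext fun β => hconc l _ fun γ hγ => ?_)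
  rw [← update_eq_self l γ, hγ]
  have hXj : (X j).dualMap (γ j) = 0 := by simp [hj, LinearMap.dualMap_apply']
  exact apply_update_dualMap_eq_zero_of_mem_centroid hX hlj hXj β

def centroidEval (T : MultilinearMap k (fun i : Fin d => Module.Dual k (W i)) k) (i : Fin d)
    (α : Module.Dual k (W i)) : centroid T →ₗ[k] Module.Dual k (W i) where
  toFun X := ((X : ∀ l, W l →ₗ[k] W l) i).dualMap α
  map_add' X Y := by ext; simp
  map_smul' c X := by ext; simp

theorem centroidEval_injective (hconc : Concise T) {i j : Fin d} (hji : j ≠ i)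
    {α : Module.Dual k (W i)} (hα : ContractionInjAt T i α j) :
    Injective (centroidEval T i α) := by
  refine (injective_iff_map_eq_zero _).mpr fun ⟨X, hX⟩ h0 => Subtype.ext ?_
  refine eq_zero_of_mem_centroid hconc hX (j := j) ?_
  refine LinearMap.eq_zero_of_dualMap_eq_zero (LinearMap.ext fun δ => hα _ fun γ hγi hγj => ?_)
  rw [← update_eq_self j γ, hγj]
  exact apply_update_dualMap_eq_zero_of_mem_centroid hX hji (hγi ▸ h0) δ

theorem contractionInjAt_of_surjective_centroidEval (hd : 3 ≤ d) (hconc : Concise T)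
    {i : Fin d} {α : Module.Dual k (W i)} (hinjAt : Surjective (centroidEval T i α))
    {j : Fin d} (hji : j ≠ i) : ContractionInjAt T i α j := by
  intro β hβ
  obtain ⟨l, hli, hlj⟩ := Fin.exists_ne_and_ne_of_two_lt i j hd
  refine hconc j β fun γ hγj => ?_
  obtain ⟨⟨X, hX⟩, hXα⟩ := hinjAt (γ i)
  have h := apply_update_dualMap_eq_of_mem_centroid hX hli.symm γ α
  rw [show (X i).dualMap α = γ i from hXα, update_eq_self] at h
  rw [h]
  refine hβ _ ?_ ?_
  · rw [update_of_ne hli.symm, update_self]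
  · rw [update_of_ne hlj.symm, update_of_ne hji, hγj]

theorem genericity_conditions_general
    (hd : 3 ≤ d) (m : ℕ)
    [∀ i, FiniteDimensional k (W i)] (hdim : ∀ i, Module.finrank k (W i) = m)
    (T : MultilinearMap k (fun i : Fin d => Module.Dual k (W i)) k)
    (hconc : Concise T) (hcen : m ≤ Module.finrank k (centroid T))
    (i : Fin d) (α : Module.Dual k (W i)) :
    ((∃ j, j ≠ i ∧ ContractionInjAt T i α j) ↔ (∀ j, j ≠ i → ContractionInjAt T i α j)) ∧
    ((∃ j, j ≠ i ∧ ContractionInjAt T i α j) ↔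
      Function.Surjective
        (fun X : centroid T => ((X : ∀ l, W l →ₗ[k] W l) i).dualMap α)) ∧
    ((∃ j, j ≠ i ∧ ContractionInjAt T i α j) →
      Module.finrank k (centroid T) = m ∧
      Function.Bijective
        (fun X : centroid T => ((X : ∀ l, W l →ₗ[k] W l) i).dualMap α)) := by
  have hdual : Module.finrank k (Module.Dual k (W i)) = m := by
    rw [Subspace.dual_finrank_eq, hdim i]
  have hbij (h : ∃ j, j ≠ i ∧ ContractionInjAt T i α j) :
      Function.Bijective (centroidEval T i α) := by
    obtain ⟨j, hji, hj⟩ := h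
    exact LinearMap.bijective_of_injective_of_finrank_le (centroidEval_injective hconc hji hj)
      (hdual ▸ hcen)
  have hinjAt (h : Function.Surjective (centroidEval T i α)) (j : Fin d) (hji : j ≠ i) :
      ContractionInjAt T i α j :=
    contractionInjAt_of_surjective_centroidEval hd hconc h hji
  obtain ⟨j₀, hj₀, -⟩ := Fin.exists_ne_and_ne_of_two_lt i i hd
  refine ⟨⟨fun h => hinjAt (hbij h).2, fun h => ⟨j₀, hj₀, h j₀ hj₀⟩⟩,
    ⟨fun h => (hbij h).2, fun h => ⟨j₀, hj₀, hinjAt h j₀ hj₀⟩⟩, fun h => ⟨?_, hbij h⟩⟩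
  rw [(LinearEquiv.ofBijective _ (hbij h)).finrank_eq, hdual]

/-- **Genericity conditions.** Let `d ≥ 3`, `dim W_i = m ≥ 1`, `T` concise with
`dim Cen(T) ≥ m`, `i` an index and `α ∈ W_i^∨`. Then the following are equivalent:
(1) the contraction at `α` is injective in some slot `j ≠ i`;
(2) the contraction at `α` is injective in every slot `j ≠ i`;
(3) the linear map `Cen(T) → W_i^∨`, `X ↦ α ∘ X_i`, is surjective.
Moreover, if these hold then `dim Cen(T) = m` and the map in (3) is bijective. -/
theorem genericity_conditions
    (hd : 3 ≤ d) (m : ℕ) (hm : 1 ≤ m)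
    [∀ i, FiniteDimensional k (W i)] (hdim : ∀ i, Module.finrank k (W i) = m)
    (T : MultilinearMap k (fun i : Fin d => Module.Dual k (W i)) k)
    (hconc : Concise T) (hcen : m ≤ Module.finrank k (centroid T))
    (i : Fin d) (α : Module.Dual k (W i)) :
    ((∃ j, j ≠ i ∧ ContractionInjAt T i α j) ↔ (∀ j, j ≠ i → ContractionInjAt T i α j)) ∧
    ((∃ j, j ≠ i ∧ ContractionInjAt T i α j) ↔
      Function.Surjective
        (fun X : centroid T => ((X : ∀ l, W l →ₗ[k] W l) i).dualMap α)) ∧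
    ((∃ j, j ≠ i ∧ ContractionInjAt T i α j) →
      Module.finrank k (centroid T) = m ∧
      Function.Bijective
        (fun X : centroid T => ((X : ∀ l, W l →ₗ[k] W l) i).dualMap α)) :=
  genericity_conditions_general hd m hdim T hconc hcen i α

end Stmt12
end

section
/- (Lemma: fiberwise injectivity of maps of free modules over a local ring.) Let A be a commutative local ring with maximal ideal m, let M and N be finitely generated free A-modules, and let f : M → N be an A-linear map such that the induced (A/m)-linear map M/mM → N/mN is injective. Then f is injective and the cokernel N/f(M) is a free A-module. -/
/-!
Under `M/𝔪M ≅ k ⊗ M` the hypothesis says that `k ⊗ f` is injective, where `k` is the residue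
field. For `M` finite and `N` finite free over a local ring, injectivity of `k ⊗ f` already makes
`f` a split injection and `N ⧸ f(M)` free, by the local criterion for freeness of a finitely
presented module (`Module.free_of_lTensor_residueField_injective`).
-/

namespace Stmt15

open TensorProduct Submodule

section

variable {R M N : Type*} [CommRing R] [AddCommGroup M] [Module R M] [AddCommGroup N] [Module R N]
  (I : Ideal R) (f : M →ₗ[R] N)

theorem quotTensorEquivQuotSMul_comp_lTensor :
    (quotTensorEquivQuotSMul N I).toLinearMap ∘ₗ f.lTensor (R ⧸ I) =
      mapQ _ _ f (smul_top_le_comap_smul_top I f) ∘ₗ (quotTensorEquivQuotSMul M I).toLinearMap := by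
  ext x
  simp [quotTensorEquivQuotSMul_mk_one_tmul]

theorem mapQ_smul_top_injective
    (hf : ∀ x, f x ∈ I • (⊤ : Submodule R N) → x ∈ I • (⊤ : Submodule R M)) :
    Function.Injective (mapQ _ _ f (smul_top_le_comap_smul_top I f)) := by
  rw [← LinearMap.ker_eq_bot, ker_mapQ, eq_bot_iff, map_le_iff_le_comap, comap_bot, ker_mkQ]
  exact hf

theorem lTensor_quotient_injective_of_mem_smul_top
    (hf : ∀ x, f x ∈ I • (⊤ : Submodule R N) → x ∈ I • (⊤ : Submodule R M)) :
    Function.Injective (f.lTensor (R ⧸ I)) := by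
  have hsquare := congrArg DFunLike.coe (quotTensorEquivQuotSMul_comp_lTensor I f)
  refine Function.Injective.of_comp (f := quotTensorEquivQuotSMul N I) ?_
  rw [← LinearEquiv.coe_toLinearMap, ← LinearMap.coe_comp, hsquare]
  exact (mapQ_smul_top_injective I f hf).comp (quotTensorEquivQuotSMul M I).injective

end

theorem injective_and_free_cokernel_of_fiberwise_injective_general
    (A : Type*) [CommRing A] [IsLocalRing A]
    (M N : Type*) [AddCommGroup M] [Module A M] [AddCommGroup N] [Module A N]
    [Module.Finite A M] [Module.Free A N] [Module.Finite A N]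
    (f : M →ₗ[A] N)
    (hf : ∀ x : M,
      f x ∈ (IsLocalRing.maximalIdeal A) • (⊤ : Submodule A N) →
      x ∈ (IsLocalRing.maximalIdeal A) • (⊤ : Submodule A M)) :
    Function.Injective f ∧ Module.Free A (N ⧸ LinearMap.range f) := by
  have hk : Function.Injective (f.lTensor (IsLocalRing.ResidueField A)) :=
    lTensor_quotient_injective_of_mem_smul_top _ f hf
  obtain ⟨g, hg⟩ := (IsLocalRing.split_injective_iff_lTensor_residueField_injective f).mpr hk
  exact ⟨Function.HasLeftInverse.injective ⟨g, LinearMap.congr_fun hg⟩,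
    Module.free_of_lTensor_residueField_injective f _ (mkQ_surjective _) f.exact_map_mkQ_range hk⟩

/-- **Fiberwise injectivity over a local ring.** Let `A` be a commutative local ring with
maximal ideal `𝔪`, let `M` and `N` be finitely generated free `A`-modules, and let
`f : M → N` be `A`-linear such that the induced map `M/𝔪M → N/𝔪N` is injective (i.e.
`f x ∈ 𝔪N` implies `x ∈ 𝔪M`). Then `f` is injective and `N / f(M)` is a free
`A`-module. -/
theorem injective_and_free_cokernel_of_fiberwise_injective
    (A : Type*) [CommRing A] [IsLocalRing A]
    (M N : Type*) [AddCommGroup M] [Module A M] [AddCommGroup N] [Module A N]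
    [Module.Free A M] [Module.Finite A M] [Module.Free A N] [Module.Finite A N]
    (f : M →ₗ[A] N)
    (hf : ∀ x : M,
      f x ∈ (IsLocalRing.maximalIdeal A) • (⊤ : Submodule A N) →
      x ∈ (IsLocalRing.maximalIdeal A) • (⊤ : Submodule A M)) :
    Function.Injective f ∧ Module.Free A (N ⧸ LinearMap.range f) :=
  injective_and_free_cokernel_of_fiberwise_injective_general A M N f hf

end Stmt15
end
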